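/- arXiv:math/0605279 — 2 statements merged into one kernel-verified Lean document; each statement's English description precedes it below -/
import Mathlib

section
/- The Lévy fractional Brownian motion is the unique (in law) Gaussian process on R^N_+ that is self-similar of index H ∈ (0,1), vanishes at 0, and has increments stationary in the strong sense: any such process X satisfies E[X_s X_t] = (σ²/2)(‖s‖^{2H} + ‖t‖^{2H} - ‖t-s‖^{2H}) with σ² = E[X_{ε_1}²]. -/
/-!
Gaussianity enters only through square integrability of each `X t`, which makes polarization
`E[X_s X_t] = (E[X_s²] + E[X_t²] - E[(X_t - X_s)²]) / 2` available. A rigid motion sends `s, t`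
to `0, ‖t - s‖ ε₁`, so strong stationarity and `X 0 = 0` give
`E[(X_t - X_s)²] = E[X_{‖t - s‖ ε₁}²]`, and self-similarity turns this into `‖t - s‖^{2H} σ²`.
-/

open MeasureTheory ProbabilityTheory Set

/-- The Euclidean norm on `ℝᴺ`. -/
noncomputable def euclNorm {N : ℕ} (x : Fin N → ℝ) : ℝ := Real.sqrt (∑ i, x i ^ 2)

/-- A rigid motion of `ℝᴺ` is a self-map preserving Euclidean distances. -/
def IsRigidMotion {N : ℕ} (g : (Fin N → ℝ) → (Fin N → ℝ)) : Prop :=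
  ∀ x y : Fin N → ℝ, euclNorm (g x - g y) = euclNorm (x - y)

/-- A real-valued process is Gaussian if every finite linear combination of its values
has a (possibly degenerate) Gaussian law. -/
def IsGaussianProcess' {Ω : Type*} [MeasureSpace Ω] {ι : Type*} (X : ι → Ω → ℝ) : Prop :=
  ∀ (n : ℕ) (t : Fin n → ι) (c : Fin n → ℝ), ∃ (μ : ℝ) (v : NNReal),
    Measure.map (fun ω => ∑ i, c i * X (t i) ω) (volume : Measure Ω) = gaussianReal μ v

lemma euclNorm_eq_norm_toLp {N : ℕ} (x : Fin N → ℝ) : euclNorm x = ‖WithLp.toLp 2 x‖ := by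
  simp [EuclideanSpace.norm_eq, euclNorm]

lemma euclNorm_smul {N : ℕ} (a : ℝ) (x : Fin N → ℝ) : euclNorm (a • x) = |a| * euclNorm x := by
  simp only [euclNorm_eq_norm_toLp, WithLp.toLp_smul, norm_smul, Real.norm_eq_abs]

lemma euclNorm_single_one {N : ℕ} (i : Fin N) : euclNorm (Pi.single i (1 : ℝ)) = 1 := by
  simp [euclNorm, Pi.single_apply]

/-- The motion is `x ↦ R (x - p)`, with `R` the reflection exchanging `q - p` and `y`. -/
lemma exists_isRigidMotion_map_eq_zero_map_eq {N : ℕ} {p q y : Fin N → ℝ}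
    (hy : euclNorm y = euclNorm (q - p)) :
    ∃ g, IsRigidMotion g ∧ g p = 0 ∧ g q = y := by
  let R := Submodule.reflection (ℝ ∙ (WithLp.toLp 2 (q - p) - WithLp.toLp 2 y))ᗮ
  refine ⟨fun x => WithLp.ofLp (R (WithLp.toLp 2 (x - p))), fun x x' => ?_, by simp, ?_⟩
  · simp only [euclNorm_eq_norm_toLp, WithLp.toLp_sub, WithLp.toLp_ofLp, ← map_sub,
      LinearIsometryEquiv.norm_map, sub_sub_sub_cancel_right]
  · have hnorm : ‖WithLp.toLp 2 (q - p)‖ = ‖WithLp.toLp 2 y‖ := by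
      rw [← euclNorm_eq_norm_toLp, ← euclNorm_eq_norm_toLp, hy]
    simp only [R, Submodule.reflection_sub hnorm, WithLp.ofLp_toLp]

lemma hasGaussianLaw_of_map_eq_gaussianReal {Ω : Type*} [MeasurableSpace Ω] {P : Measure Ω}
    {Y : Ω → ℝ} {m : ℝ} {v : NNReal} (h : P.map Y = gaussianReal m v) : HasGaussianLaw Y P :=
  ⟨by rw [h]; infer_instance⟩

lemma IsGaussianProcess'.hasGaussianLaw {Ω ι : Type*} [MeasureSpace Ω] {X : ι → Ω → ℝ}
    (hX : IsGaussianProcess' X) (t : ι) : HasGaussianLaw (X t) volume := by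
  obtain ⟨m, v, h⟩ := hX 1 (fun _ => t) (fun _ => 1)
  simp only [Finset.univ_unique, Finset.sum_singleton, one_mul] at h
  exact hasGaussianLaw_of_map_eq_gaussianReal h

lemma integral_mul_eq_polarization {α : Type*} [MeasurableSpace α] {μ : Measure α}
    {f g : α → ℝ} (hf : MemLp f 2 μ) (hg : MemLp g 2 μ) :
    ∫ x, f x * g x ∂μ = (∫ x, f x ^ 2 ∂μ + ∫ x, g x ^ 2 ∂μ - ∫ x, (g x - f x) ^ 2 ∂μ) / 2 := by
  rw [← integral_add hf.integrable_sq hg.integrable_sq,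
    ← integral_sub (f := fun x => f x ^ 2 + g x ^ 2) (g := fun x => (g x - f x) ^ 2)
      (hf.integrable_sq.add hg.integrable_sq) (hg.sub hf).integrable_sq, ← integral_div]
  exact integral_congr_ae (ae_of_all _ fun x => by ring)

section

variable {Ω : Type*} [MeasureSpace Ω] {N : ℕ}

def IsSelfSimilar (H : ℝ) (X : (Fin N → ℝ) → Ω → ℝ) : Prop :=
  ∀ a : ℝ, 0 ≤ a → ∀ (n : ℕ) (ts : Fin n → (Fin N → ℝ)), (∀ i, 0 ≤ ts i) →
    Measure.map (fun ω i => X (a • ts i) ω) (volume : Measure Ω) =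
      Measure.map (fun ω i => a ^ H * X (ts i) ω) (volume : Measure Ω)

def HasStrongStationaryIncrements (X : (Fin N → ℝ) → Ω → ℝ) : Prop :=
  ∀ g : (Fin N → ℝ) → (Fin N → ℝ), IsRigidMotion g →
    ∀ (n : ℕ) (ts : Fin n → (Fin N → ℝ)), (∀ i, 0 ≤ ts i) →
      Measure.map (fun ω i => X (g (ts i)) ω - X (g 0) ω) (volume : Measure Ω) =
        Measure.map (fun ω i => X (ts i) ω - X 0 ω) (volume : Measure Ω)

variable {X : (Fin N → ℝ) → Ω → ℝ}

lemma IsSelfSimilar.identDistrib {H : ℝ} (hss : IsSelfSimilar H X)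
    (hX : ∀ t, AEMeasurable (X t)) {a : ℝ} (ha : 0 ≤ a) {t : Fin N → ℝ} (ht : 0 ≤ t) :
    IdentDistrib (X (a • t)) (fun ω => a ^ H * X t ω) := by
  have h1 : IdentDistrib (fun ω (_ : Fin 1) => X (a • t) ω) (fun ω _ => a ^ H * X t ω) :=
    ⟨by fun_prop, by fun_prop, hss a ha 1 (fun _ => t) fun _ => ht⟩
  exact h1.comp (measurable_pi_apply 0)

lemma IsSelfSimilar.integral_sq_smul {H : ℝ} (hss : IsSelfSimilar H X)
    (hX : ∀ t, AEMeasurable (X t)) {a : ℝ} (ha : 0 ≤ a) {t : Fin N → ℝ} (ht : 0 ≤ t) :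
    ∫ ω, X (a • t) ω ^ 2 = a ^ (2 * H) * ∫ ω, X t ω ^ 2 := by
  have h := ((hss.identDistrib hX ha ht).comp (continuous_pow 2).measurable).integral_eq
  simp only [Function.comp_def] at h
  simp only [h, mul_pow, integral_const_mul]
  rw [← Real.rpow_natCast, ← Real.rpow_mul ha, mul_comm H]
  norm_num

lemma HasStrongStationaryIncrements.identDistrib (hst : HasStrongStationaryIncrements X)
    (hX : ∀ t, AEMeasurable (X t)) {g : (Fin N → ℝ) → (Fin N → ℝ)} (hg : IsRigidMotion g)
    {p q : Fin N → ℝ} (hp : 0 ≤ p) (hq : 0 ≤ q) :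
    IdentDistrib (fun ω => X (g q) ω - X (g p) ω) (fun ω => X q ω - X p ω) := by
  have hpq : ∀ i, 0 ≤ ![p, q] i := Fin.forall_fin_two.2 ⟨hp, hq⟩
  have h2 : IdentDistrib (fun ω i => X (g (![p, q] i)) ω - X (g 0) ω)
      (fun ω i => X (![p, q] i) ω - X 0 ω) :=
    ⟨by fun_prop, by fun_prop, hst g hg 2 ![p, q] hpq⟩
  simpa [Function.comp_def] using
    h2.comp ((measurable_pi_apply 1).sub (measurable_pi_apply 0))

lemma integral_sq_sub_eq {H : ℝ} (hst : HasStrongStationaryIncrements X)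
    (hss : IsSelfSimilar H X) (hzero : ∀ᵐ ω, X 0 ω = 0) (hX : ∀ t, AEMeasurable (X t))
    (i : Fin N) {p q : Fin N → ℝ} (hp : 0 ≤ p) (hq : 0 ≤ q) :
    ∫ ω, (X q ω - X p ω) ^ 2 = euclNorm (q - p) ^ (2 * H) * ∫ ω, X (Pi.single i 1) ω ^ 2 := by
  set r := euclNorm (q - p)
  have hr : 0 ≤ r := Real.sqrt_nonneg _
  obtain ⟨g, hg, hgp, hgq⟩ := exists_isRigidMotion_map_eq_zero_map_eq (p := p) (q := q)
    (y := r • Pi.single i 1) (by rw [euclNorm_smul, euclNorm_single_one, abs_of_nonneg hr, mul_one])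
  have hinc := ((hst.identDistrib hX hg hp hq).comp (continuous_pow 2).measurable).integral_eq
  simp only [Function.comp_def, hgp, hgq] at hinc
  calc ∫ ω, (X q ω - X p ω) ^ 2 = ∫ ω, (X (r • Pi.single i 1) ω - X 0 ω) ^ 2 := hinc.symm
    _ = ∫ ω, X (r • Pi.single i 1) ω ^ 2 :=
      integral_congr_ae (by filter_upwards [hzero] with ω h0 using by rw [h0, sub_zero])
    _ = r ^ (2 * H) * ∫ ω, X (Pi.single i 1) ω ^ 2 :=
      hss.integral_sq_smul hX hr (Pi.single_nonneg.2 zero_le_one)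

lemma integral_sq_eq {H : ℝ} (hst : HasStrongStationaryIncrements X)
    (hss : IsSelfSimilar H X) (hzero : ∀ᵐ ω, X 0 ω = 0) (hX : ∀ t, AEMeasurable (X t))
    (i : Fin N) {t : Fin N → ℝ} (ht : 0 ≤ t) :
    ∫ ω, X t ω ^ 2 = euclNorm t ^ (2 * H) * ∫ ω, X (Pi.single i 1) ω ^ 2 := by
  calc ∫ ω, X t ω ^ 2 = ∫ ω, (X t ω - X 0 ω) ^ 2 :=
        integral_congr_ae (by filter_upwards [hzero] with ω h0 using by rw [h0, sub_zero])
    _ = euclNorm (t - 0) ^ (2 * H) * ∫ ω, X (Pi.single i 1) ω ^ 2 :=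
        integral_sq_sub_eq hst hss hzero hX i le_rfl ht
    _ = euclNorm t ^ (2 * H) * ∫ ω, X (Pi.single i 1) ω ^ 2 := by rw [sub_zero]

end

theorem levy_fbm_characterization_general {Ω : Type*} [MeasureSpace Ω]
    (N : ℕ) (hN : 0 < N) (H : ℝ)
    (X : (Fin N → ℝ) → Ω → ℝ)
    (hgauss : IsGaussianProcess' X)
    (hzero : ∀ᵐ ω ∂(volume : Measure Ω), X 0 ω = 0)
    (hss : ∀ a : ℝ, 0 ≤ a → ∀ (n : ℕ) (ts : Fin n → (Fin N → ℝ)), (∀ i, 0 ≤ ts i) →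
      Measure.map (fun ω i => X (a • ts i) ω) (volume : Measure Ω) =
        Measure.map (fun ω i => a ^ H * X (ts i) ω) (volume : Measure Ω))
    (hstat : ∀ g : (Fin N → ℝ) → (Fin N → ℝ), IsRigidMotion g →
      ∀ (n : ℕ) (ts : Fin n → (Fin N → ℝ)), (∀ i, 0 ≤ ts i) →
        Measure.map (fun ω i => X (g (ts i)) ω - X (g 0) ω) (volume : Measure Ω) =
          Measure.map (fun ω i => X (ts i) ω - X 0 ω) (volume : Measure Ω)) :
    ∀ s t : Fin N → ℝ, 0 ≤ s → 0 ≤ t →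
      ∫ ω, X s ω * X t ω =
        ((∫ ω, (X (Pi.single (⟨0, hN⟩ : Fin N) 1) ω) ^ 2) / 2) *
          (euclNorm s ^ (2 * H) + euclNorm t ^ (2 * H) - euclNorm (t - s) ^ (2 * H)) := by
  intro s t hs ht
  have hX : ∀ p, AEMeasurable (X p) := fun p => (hgauss.hasGaussianLaw p).aemeasurable
  have hL2 : ∀ p, MemLp (X p) 2 := fun p => (hgauss.hasGaussianLaw p).memLp_two
  rw [integral_mul_eq_polarization (hL2 s) (hL2 t),
    integral_sq_eq hstat hss hzero hX ⟨0, hN⟩ hs, integral_sq_eq hstat hss hzero hX ⟨0, hN⟩ ht,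
    integral_sq_sub_eq hstat hss hzero hX ⟨0, hN⟩ hs ht]
  ring

/-- characterization of the Lévy fBm.  Any Gaussian process on `ℝᴺ₊`,
self-similar of index `H ∈ (0,1)`, vanishing at `0`, with increments stationary in the strong
sense, has covariance `(σ²/2)(‖s‖^{2H} + ‖t‖^{2H} - ‖t-s‖^{2H})` with `σ² = E[X_{ε₁}²]`. -/
theorem levy_fbm_characterization {Ω : Type*} [MeasureSpace Ω]
    [IsProbabilityMeasure (volume : Measure Ω)]
    (N : ℕ) (hN : 0 < N) (H : ℝ) (hH : H ∈ Set.Ioo (0 : ℝ) 1)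
    (X : (Fin N → ℝ) → Ω → ℝ)
    (hmeas : ∀ t, Measurable (X t))
    (hgauss : IsGaussianProcess' X)
    (hzero : ∀ᵐ ω ∂(volume : Measure Ω), X 0 ω = 0)
    (hss : ∀ a : ℝ, 0 ≤ a → ∀ (n : ℕ) (ts : Fin n → (Fin N → ℝ)), (∀ i, 0 ≤ ts i) →
      Measure.map (fun ω i => X (a • ts i) ω) (volume : Measure Ω) =
        Measure.map (fun ω i => a ^ H * X (ts i) ω) (volume : Measure Ω))
    (hstat : ∀ g : (Fin N → ℝ) → (Fin N → ℝ), IsRigidMotion g →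
      ∀ (n : ℕ) (ts : Fin n → (Fin N → ℝ)), (∀ i, 0 ≤ ts i) →
        Measure.map (fun ω i => X (g (ts i)) ω - X (g 0) ω) (volume : Measure Ω) =
          Measure.map (fun ω i => X (ts i) ω - X 0 ω) (volume : Measure Ω)) :
    ∀ s t : Fin N → ℝ, 0 ≤ s → 0 ≤ t →
      ∫ ω, X s ω * X t ω =
        ((∫ ω, (X (Pi.single (⟨0, hN⟩ : Fin N) 1) ω) ^ 2) / 2) *
          (euclNorm s ^ (2 * H) + euclNorm t ^ (2 * H) - euclNorm (t - s) ^ (2 * H)) :=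
  levy_fbm_characterization_general N hN H X hgauss hzero hss hstat
end

section
/- Let f: [a,b] → R^N_+ be a flow (increasing for the componentwise order) and B^H a multiparameter fractional Brownian motion with measure m. Then the projected process (B^H)^f_t = B^H_{f(t)} is a time-changed fractional Brownian motion: its covariance is E[(B^H)^f_s (B^H)^f_t] = (1/2)[θ(s)^{2H} + θ(t)^{2H} - |θ(t) - θ(s)|^{2H}], where θ(t) = m([0, f(t)]). -/
open MeasureTheory Set

/-- the projection of the multiparameter fBm along a flow `f : [a,b] → ℝᴺ₊` is a
time-changed fractional Brownian motion, with time change `θ(t) = m([0, f(t)])`. -/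
theorem mpfbm_projection_on_flow {Ω : Type*} [MeasureSpace Ω]
    [IsProbabilityMeasure (volume : Measure Ω)]
    (N : ℕ) (m : Measure (Fin N → ℝ)) (hfin : ∀ t : Fin N → ℝ, m (Set.Icc 0 t) ≠ ⊤)
    (H : ℝ) (hH : H ∈ Set.Ioc (0 : ℝ) (1 / 2))
    (B : (Fin N → ℝ) → Ω → ℝ)
    (hcov : ∀ u v : Fin N → ℝ, 0 ≤ u → 0 ≤ v →
      ∫ ω, B u ω * B v ω =
        (1 / 2) * ((m (Set.Icc 0 u)).toReal ^ (2 * H)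
          + (m (Set.Icc 0 v)).toReal ^ (2 * H)
          - (m (symmDiff (Set.Icc 0 u) (Set.Icc 0 v))).toReal ^ (2 * H)))
    (a b : ℝ) (f : ℝ → Fin N → ℝ)
    (hpos : ∀ x ∈ Set.Icc a b, 0 ≤ f x)
    (hflow : ∀ x y, a ≤ x → x < y → y ≤ b → f x ≤ f y) :
    ∀ s ∈ Set.Icc a b, ∀ t ∈ Set.Icc a b,
      ∫ ω, B (f s) ω * B (f t) ω =
        (1 / 2) * ((m (Set.Icc 0 (f s))).toReal ^ (2 * H)
          + (m (Set.Icc 0 (f t))).toReal ^ (2 * H)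
          - |(m (Set.Icc 0 (f t))).toReal - (m (Set.Icc 0 (f s))).toReal| ^ (2 * H)) := by
  have main : ∀ s ∈ Set.Icc a b, ∀ t ∈ Set.Icc a b, s ≤ t →
      ∫ ω, B (f s) ω * B (f t) ω =
        (1 / 2) * ((m (Set.Icc 0 (f s))).toReal ^ (2 * H)
          + (m (Set.Icc 0 (f t))).toReal ^ (2 * H)
          - |(m (Set.Icc 0 (f t))).toReal - (m (Set.Icc 0 (f s))).toReal| ^ (2 * H)) := by
    intro s hs t ht hst
    rcases eq_or_lt_of_le hst with h | h
    · subst h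
      rw [hcov _ _ (hpos s hs) (hpos s hs)]
      simp [symmDiff_self]
    · have hle : f s ≤ f t := hflow s t hs.1 h ht.2
      have hsub : Set.Icc (0 : Fin N → ℝ) (f s) ⊆ Set.Icc 0 (f t) :=
        Set.Icc_subset_Icc le_rfl hle
      rw [hcov _ _ (hpos s hs) (hpos t ht)]
      have hsd : symmDiff (Set.Icc (0 : Fin N → ℝ) (f s)) (Set.Icc 0 (f t)) =
          Set.Icc 0 (f t) \ Set.Icc 0 (f s) := symmDiff_of_le hsub
      rw [hsd, measure_diff hsub measurableSet_Icc.nullMeasurableSet (hfin _),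
        ENNReal.toReal_sub_of_le (measure_mono hsub) (hfin _),
        abs_of_nonneg (sub_nonneg.2 (ENNReal.toReal_mono (hfin _) (measure_mono hsub)))]
  intro s hs t ht
  rcases le_total s t with h | h
  · exact main s hs t ht h
  · have := main t ht s hs h
    calc ∫ ω, B (f s) ω * B (f t) ω = ∫ ω, B (f t) ω * B (f s) ω := by
          simp_rw [mul_comm]
      _ = _ := by rw [this, abs_sub_comm]; ring
end
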